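/- arXiv:2304.09171 — 3 statements merged into one kernel-verified Lean document; each statement's English description precedes it below -/
import Mathlib

section
/- Let $r, s$ be coprime squarefree positive integers and $k \geq 1$. Define $\mathcal{T}_k(\ell; q) = q^{-1/2} \sum_{\chi \bmod q \text{ primitive}} \tau(\chi)^k q^{-k/2} \chi(\ell)$ where $\tau(\chi)$ is the Gauss sum. Then $\mathcal{T}_k(m; rs) = \mathcal{T}_k(m r^k; s) \cdot \mathcal{T}_k(m s^k; r)$. -/
/-!
For coprime `r, s`, every Dirichlet character mod `rs` is uniquely `ψν` with `ψ` mod `r` and `ν`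
mod `s` (both lifted to level `rs`), and the conductor of `ψν` is the product of the conductors of
`ψ` and `ν`; so `ψν` is primitive exactly when `ψ` and `ν` are. Parametrising `ZMod (rs)` by
`x = s a + r b` splits `e(x/rs) = e(a/r) e(b/s)` and gives `τ(ψν) = ψ(s) ν(r) τ(ψ) τ(ν)`. Hence the
`ψν`-summand of `𝒯_k(m; rs)` is the product of the `ψ`-summand of `𝒯_k(m s^k; r)` and the
`ν`-summand of `𝒯_k(m r^k; s)`, because `ψ(s)^k ψ(m) = ψ(m s^k)`.
-/

open scoped Classical

/-- The additive character `e(x/q) = exp(2πi x/q)` on `ZMod q`. -/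
noncomputable def eChar (q : ℕ) [NeZero q] (x : ZMod q) : ℂ :=
  Complex.exp (2 * Real.pi * Complex.I * x.val / q)

/-- The Gauss sum `τ(χ) = ∑_{x mod q} χ(x) e(x/q)`. -/
noncomputable def gaussSum' (q : ℕ) [NeZero q] (χ : DirichletCharacter ℂ q) : ℂ :=
  ∑ x : ZMod q, χ x * eChar q x

/-- `𝒯_k(ℓ; q) = q^{-1/2} ∑_{χ mod q primitive} τ(χ)^k q^{-k/2} χ(ℓ)`. -/
noncomputable def Tsum (k : ℕ) (ℓ : ℤ) (q : ℕ) [NeZero q] : ℂ :=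
  (((q : ℝ) ^ (-(1:ℝ)/2) : ℝ) : ℂ) *
    ∑ χ : DirichletCharacter ℂ q, if χ.IsPrimitive then
      gaussSum' q χ ^ k / (((q : ℝ) ^ ((k:ℝ)/2) : ℝ) : ℂ) * χ (ℓ : ZMod q) else 0

namespace ZMod

variable {r s : ℕ}

lemma isUnit_iff_isUnit_castHom [NeZero r] [NeZero s] (x : ZMod (r * s)) :
    IsUnit x ↔ IsUnit (castHom (dvd_mul_right r s) (ZMod r) x) ∧
      IsUnit (castHom (dvd_mul_left s r) (ZMod s) x) := by
  rw [← natCast_zmod_val x, map_natCast, map_natCast, isUnit_iff_coprime, isUnit_iff_coprime,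
    isUnit_iff_coprime, Nat.coprime_mul_iff_right]

lemma castHom_chineseRemainder_symm_fst (hrs : r.Coprime s) (p : ZMod r × ZMod s) :
    castHom (dvd_mul_right r s) (ZMod r) ((chineseRemainder hrs).symm p) = p.1 := by
  have h : castHom (dvd_mul_right r s) (ZMod r) =
      (RingHom.fst _ _).comp (chineseRemainder hrs).toRingHom := Subsingleton.elim _ _
  simp [h]

lemma castHom_chineseRemainder_symm_snd (hrs : r.Coprime s) (p : ZMod r × ZMod s) :
    castHom (dvd_mul_left s r) (ZMod s) ((chineseRemainder hrs).symm p) = p.2 := by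
  have h : castHom (dvd_mul_left s r) (ZMod s) =
      (RingHom.snd _ _).comp (chineseRemainder hrs).toRingHom := Subsingleton.elim _ _
  simp [h]

lemma castHom_natCast_mul_add_fst [NeZero r] (a : ZMod r) (b : ZMod s) :
    castHom (dvd_mul_right r s) (ZMod r) ((s * a.val + r * b.val : ℕ) : ZMod (r * s)) =
      s * a := by
  rw [map_natCast, Nat.cast_add, Nat.cast_mul, Nat.cast_mul, natCast_self, zero_mul, add_zero,
    natCast_zmod_val]

lemma castHom_natCast_mul_add_snd [NeZero s] (a : ZMod r) (b : ZMod s) :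
    castHom (dvd_mul_left s r) (ZMod s) ((s * a.val + r * b.val : ℕ) : ZMod (r * s)) =
      r * b := by
  rw [map_natCast, Nat.cast_add, Nat.cast_mul, Nat.cast_mul, natCast_self, zero_mul, zero_add,
    natCast_zmod_val]

lemma bijective_natCast_mul_add [NeZero r] [NeZero s] (hrs : r.Coprime s) :
    Function.Bijective fun p : ZMod r × ZMod s ↦
      ((s * p.1.val + r * p.2.val : ℕ) : ZMod (r * s)) := by
  refine (Fintype.bijective_iff_injective_and_card _).mpr ⟨?_, by simp⟩
  rintro ⟨a, b⟩ ⟨a', b'⟩ h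
  have hs : IsUnit (s : ZMod r) := (isUnit_iff_coprime s r).mpr hrs.symm
  have hr : IsUnit (r : ZMod s) := (isUnit_iff_coprime r s).mpr hrs
  have h₁ := congrArg (castHom (dvd_mul_right r s) (ZMod r)) h
  have h₂ := congrArg (castHom (dvd_mul_left s r) (ZMod s)) h
  simp only [castHom_natCast_mul_add_fst, castHom_natCast_mul_add_snd] at h₁ h₂
  exact Prod.ext (hs.mul_left_cancel h₁) (hr.mul_left_cancel h₂)

lemma stdAddChar_natCast_mul {N d e : ℕ} [NeZero N] [NeZero d] (hN : N = d * e) (n : ℕ) :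
    stdAddChar ((e * n : ℕ) : ZMod N) = stdAddChar (n : ZMod d) := by
  subst hN
  have he : (e : ℂ) ≠ 0 := Nat.cast_ne_zero.mpr (right_ne_zero_of_mul (NeZero.ne (d * e)))
  rw [stdAddChar_apply, stdAddChar_apply, toCircle_natCast, toCircle_natCast]
  push_cast
  field_simp

end ZMod

namespace DirichletCharacter

open ZMod

variable {R : Type*} [CommMonoidWithZero R] {r s : ℕ}

lemma apply_intCast_mul_pow {q : ℕ} (χ : DirichletCharacter R q) (m : ℤ) (n k : ℕ) :
    χ ((m * (n : ℤ) ^ k : ℤ) : ZMod q) = χ (m : ZMod q) * χ (n : ZMod q) ^ k := by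
  push_cast
  rw [map_mul, map_pow]

noncomputable def mulChangeLevel (ψ : DirichletCharacter R r) (ν : DirichletCharacter R s) :
    DirichletCharacter R (r * s) :=
  changeLevel (dvd_mul_right r s) ψ * changeLevel (dvd_mul_left s r) ν

lemma mulChangeLevel_apply [NeZero r] [NeZero s] (ψ : DirichletCharacter R r)
    (ν : DirichletCharacter R s) (x : ZMod (r * s)) :
    mulChangeLevel ψ ν x =
      ψ (castHom (dvd_mul_right r s) (ZMod r) x) * ν (castHom (dvd_mul_left s r) (ZMod s) x) := by
  by_cases hx : IsUnit x
  · rw [mulChangeLevel, MulChar.mul_apply, ← hx.unit_spec, changeLevel_eq_cast_of_dvd,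
      changeLevel_eq_cast_of_dvd, castHom_apply, castHom_apply]
  · rw [MulChar.map_nonunit _ hx]
    rcases not_and_or.mp (mt (isUnit_iff_isUnit_castHom x).mpr hx) with h | h
    · rw [MulChar.map_nonunit ψ h, zero_mul]
    · rw [MulChar.map_nonunit ν h, mul_zero]

lemma conductor_mulChangeLevel [NeZero r] [NeZero s] (hrs : r.Coprime s)
    (ψ : DirichletCharacter R r) (ν : DirichletCharacter R s) :
    (mulChangeLevel ψ ν).conductor = ψ.conductor * ν.conductor := by
  have hcop : ψ.conductor.Coprime ν.conductor :=
    (hrs.coprime_dvd_left ψ.conductor_dvd_level).coprime_dvd_right ν.conductor_dvd_level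
  -- `ψ = (ψν) ν⁻¹`, and the conductor of a product divides the lcm of the conductors
  have hψ : ψ.conductor ∣ (mulChangeLevel ψ ν).conductor := by
    have h := conductor_mul_dvd_lcm_conductor (mulChangeLevel ψ ν)
      (changeLevel (dvd_mul_left s r) ν)⁻¹
    rw [mulChangeLevel, mul_inv_cancel_right, conductor_changeLevel, conductor_inv,
      conductor_changeLevel] at h
    exact hcop.dvd_of_dvd_mul_right (h.trans (Nat.lcm_dvd_mul _ _))
  have hν : ν.conductor ∣ (mulChangeLevel ψ ν).conductor := by
    have h := conductor_mul_dvd_lcm_conductor (changeLevel (dvd_mul_right r s) ψ)⁻¹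
      (mulChangeLevel ψ ν)
    rw [mulChangeLevel, inv_mul_cancel_left, conductor_changeLevel, conductor_inv,
      conductor_changeLevel] at h
    exact hcop.symm.dvd_of_dvd_mul_left (h.trans (Nat.lcm_dvd_mul _ _))
  refine Nat.dvd_antisymm ?_ (hcop.mul_dvd_of_dvd_of_dvd hψ hν)
  have h := conductor_mul_dvd_lcm_conductor (changeLevel (dvd_mul_right r s) ψ)
    (changeLevel (dvd_mul_left s r) ν)
  rw [conductor_changeLevel, conductor_changeLevel] at h
  exact h.trans (Nat.lcm_dvd_mul _ _)

lemma isPrimitive_mulChangeLevel_iff [NeZero r] [NeZero s] (hrs : r.Coprime s)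
    (ψ : DirichletCharacter R r) (ν : DirichletCharacter R s) :
    (mulChangeLevel ψ ν).IsPrimitive ↔ ψ.IsPrimitive ∧ ν.IsPrimitive := by
  rw [IsPrimitive, IsPrimitive, IsPrimitive, conductor_mulChangeLevel hrs]
  have hψ := Nat.le_of_dvd (Nat.pos_of_ne_zero (NeZero.ne r)) ψ.conductor_dvd_level
  have hν := Nat.le_of_dvd (Nat.pos_of_ne_zero (NeZero.ne s)) ν.conductor_dvd_level
  have hψ₀ := Nat.pos_of_ne_zero ψ.conductor_ne_zero
  have hν₀ := Nat.pos_of_ne_zero ν.conductor_ne_zero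
  constructor
  · intro h
    constructor <;> nlinarith
  · rintro ⟨h₁, h₂⟩
    rw [h₁, h₂]

lemma mulChangeLevel_injective [NeZero r] [NeZero s] (hrs : r.Coprime s) :
    Function.Injective fun p : DirichletCharacter R r × DirichletCharacter R s ↦
      mulChangeLevel p.1 p.2 := by
  rintro ⟨ψ, ν⟩ ⟨ψ', ν'⟩ h
  have hval (p : ZMod r × ZMod s) : ψ p.1 * ν p.2 = ψ' p.1 * ν' p.2 := by
    simpa only [mulChangeLevel_apply, castHom_chineseRemainder_symm_fst,
      castHom_chineseRemainder_symm_snd] using DFunLike.congr_fun h ((chineseRemainder hrs).symm p)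
  refine Prod.ext (MulChar.ext fun a ↦ ?_) (MulChar.ext fun b ↦ ?_)
  · simpa using hval (a, 1)
  · simpa using hval (1, b)

lemma mulChangeLevel_bijective [NeZero r] [NeZero s] (hrs : r.Coprime s) :
    Function.Bijective fun p : DirichletCharacter ℂ r × DirichletCharacter ℂ s ↦
      mulChangeLevel p.1 p.2 := by
  refine (mulChangeLevel_injective hrs).bijective_of_nat_card_le (le_of_eq ?_)
  rw [Nat.card_prod, card_eq_totient_of_hasEnoughRootsOfUnity,
    card_eq_totient_of_hasEnoughRootsOfUnity, card_eq_totient_of_hasEnoughRootsOfUnity,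
    Nat.totient_mul hrs]

theorem gaussSum_mulChangeLevel [NeZero r] [NeZero s] (hrs : r.Coprime s)
    (ψ : DirichletCharacter ℂ r) (ν : DirichletCharacter ℂ s) :
    gaussSum (mulChangeLevel ψ ν) stdAddChar =
      ψ s * ν r * (gaussSum ψ stdAddChar * gaussSum ν stdAddChar) := by
  have hterm (a : ZMod r) (b : ZMod s) :
      mulChangeLevel ψ ν ((s * a.val + r * b.val : ℕ) : ZMod (r * s)) *
          stdAddChar ((s * a.val + r * b.val : ℕ) : ZMod (r * s)) =
        ψ s * ν r * ((ψ a * stdAddChar a) * (ν b * stdAddChar b)) := by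
    rw [mulChangeLevel_apply, castHom_natCast_mul_add_fst, castHom_natCast_mul_add_snd,
      Nat.cast_add, AddChar.map_add_eq_mul, stdAddChar_natCast_mul rfl,
      stdAddChar_natCast_mul (mul_comm r s), natCast_zmod_val, natCast_zmod_val, map_mul, map_mul]
    ring
  rw [gaussSum, ← Equiv.sum_comp (Equiv.ofBijective _ (bijective_natCast_mul_add hrs)),
    Fintype.sum_prod_type, gaussSum, gaussSum, Finset.sum_mul_sum, Finset.mul_sum]
  simp only [Equiv.ofBijective_apply, hterm, Finset.mul_sum]

end DirichletCharacter

open DirichletCharacter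

lemma gaussSum'_eq_gaussSum (q : ℕ) [NeZero q] (χ : DirichletCharacter ℂ q) :
    gaussSum' q χ = gaussSum χ ZMod.stdAddChar := by
  have he : eChar q = ZMod.stdAddChar := by
    ext x
    rw [eChar, ZMod.stdAddChar_apply, ZMod.toCircle_apply]
  rw [gaussSum', gaussSum, he]

lemma ofReal_rpow_natCast_mul (r s : ℕ) (x : ℝ) :
    ((((r * s : ℕ) : ℝ) ^ x : ℝ) : ℂ) = (((r : ℝ) ^ x : ℝ) : ℂ) * (((s : ℝ) ^ x : ℝ) : ℂ) := by
  rw [Nat.cast_mul, Real.mul_rpow (Nat.cast_nonneg r) (Nat.cast_nonneg s), Complex.ofReal_mul]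

noncomputable def tsumTerm (k : ℕ) (ℓ : ℤ) (q : ℕ) [NeZero q] (χ : DirichletCharacter ℂ q) : ℂ :=
  if χ.IsPrimitive then
    gaussSum' q χ ^ k / (((q : ℝ) ^ ((k:ℝ)/2) : ℝ) : ℂ) * χ (ℓ : ZMod q) else 0

lemma Tsum_eq_sum_tsumTerm (k : ℕ) (ℓ : ℤ) (q : ℕ) [NeZero q] :
    Tsum k ℓ q = (((q : ℝ) ^ (-(1:ℝ)/2) : ℝ) : ℂ) * ∑ χ, tsumTerm k ℓ q χ :=
  rfl

lemma tsumTerm_mulChangeLevel {r s : ℕ} [NeZero r] [NeZero s] (hrs : r.Coprime s) (k : ℕ)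
    (m : ℤ) (ψ : DirichletCharacter ℂ r) (ν : DirichletCharacter ℂ s) :
    tsumTerm k m (r * s) (mulChangeLevel ψ ν) =
      tsumTerm k (m * (s : ℤ) ^ k) r ψ * tsumTerm k (m * (r : ℤ) ^ k) s ν := by
  by_cases hψ : ψ.IsPrimitive
  · by_cases hν : ν.IsPrimitive
    · have hm : mulChangeLevel ψ ν (m : ZMod (r * s)) = ψ m * ν m := by
        rw [mulChangeLevel_apply, map_intCast (ZMod.castHom (dvd_mul_right r s) (ZMod r)),
          map_intCast (ZMod.castHom (dvd_mul_left s r) (ZMod s))]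
      simp only [tsumTerm, if_pos ((isPrimitive_mulChangeLevel_iff hrs ψ ν).mpr ⟨hψ, hν⟩),
        if_pos hψ, if_pos hν, gaussSum'_eq_gaussSum, gaussSum_mulChangeLevel hrs,
        ofReal_rpow_natCast_mul, hm, apply_intCast_mul_pow]
      ring
    · simp [tsumTerm, isPrimitive_mulChangeLevel_iff hrs, hν]
  · simp [tsumTerm, isPrimitive_mulChangeLevel_iff hrs, hψ]

theorem Tsum_mul_general (r s : ℕ) [NeZero r] [NeZero s]
    (hrs : Nat.Coprime r s) (k : ℕ) (m : ℤ) :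
    Tsum k m (r * s) = Tsum k (m * (r : ℤ) ^ k) s * Tsum k (m * (s : ℤ) ^ k) r := by
  rw [Tsum_eq_sum_tsumTerm, Tsum_eq_sum_tsumTerm, Tsum_eq_sum_tsumTerm,
    ← Equiv.sum_comp (Equiv.ofBijective _ (mulChangeLevel_bijective hrs)),
    Fintype.sum_prod_type, ofReal_rpow_natCast_mul]
  simp only [Equiv.ofBijective_apply, tsumTerm_mulChangeLevel hrs]
  rw [← Finset.sum_mul_sum]
  ring

/-- Twisted multiplicativity: for coprime squarefree `r, s` and `k ≥ 1`,
`𝒯_k(m; rs) = 𝒯_k(m r^k; s) ⬝ 𝒯_k(m s^k; r)`. -/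
theorem Tsum_mul (r s : ℕ) [NeZero r] [NeZero s] (hr : Squarefree r) (hs : Squarefree s)
    (hrs : Nat.Coprime r s) (k : ℕ) (hk : 1 ≤ k) (m : ℤ) :
    Tsum k m (r * s) = Tsum k (m * (r : ℤ) ^ k) s * Tsum k (m * (s : ℤ) ^ k) r :=
  Tsum_mul_general r s hrs k m
end

section
/- Let $0 < \delta < 1$, $\alpha > 10$, and let $n, k$ be nonnegative integers with $|n - \alpha \log\log Q| \leq 100$ and $|k - \delta \log\log Q| \leq 100$ for some $Q \geq 16$. Then there exists an absolute constant $C > 10$ such that $\sum_{j \leq k} \binom{n}{j} \leq e^{C\alpha/\delta} (\log Q)^{\delta \log(1/\delta) + (1 + \log\alpha)\delta}$. -/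
/-!
Chernoff's trick: for `0 < t ≤ 1`, `∑_{j ≤ k} C(n,j) ≤ t⁻ᵏ ∑_j C(n,j) tʲ = t⁻ᵏ (1 + t)ⁿ ≤ exp (k log t⁻¹ + n t)`.
Taking `t = δ / α` and `n ≤ α log log Q + 100`, `k ≤ δ log log Q + 100`, the terms proportional to
`log log Q` give the exponent of `log Q`, and the rest is at most `100 log (α / δ) + 100 ≤ 100 α / δ`.
-/

open Real Finset

lemma sum_range_choose_mul_pow_le_one_add_pow {t : ℝ} (ht : 0 ≤ t) (n k : ℕ) :
    ∑ j ∈ range (k + 1), (n.choose j : ℝ) * t ^ j ≤ (1 + t) ^ n := by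
  calc ∑ j ∈ range (k + 1), (n.choose j : ℝ) * t ^ j
      ≤ ∑ j ∈ range (k + 1 + n), (n.choose j : ℝ) * t ^ j :=
        sum_le_sum_of_subset_of_nonneg (range_subset_range.2 (by omega))
          fun _ _ _ => by positivity
    _ = ∑ j ∈ range (n + 1), (n.choose j : ℝ) * t ^ j := by
        refine (sum_subset (range_subset_range.2 (by omega)) fun j _ hj => ?_).symm
        rw [Nat.choose_eq_zero_of_lt (by simpa using hj), Nat.cast_zero, zero_mul]
    _ = (1 + t) ^ n := by
        rw [add_comm 1 t, add_pow]
        exact sum_congr rfl fun j _ => by rw [one_pow, mul_one, mul_comm]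

lemma sum_range_choose_le_exp {t : ℝ} (ht₀ : 0 < t) (ht₁ : t ≤ 1) (n k : ℕ) :
    ∑ j ∈ range (k + 1), (n.choose j : ℝ) ≤ exp (k * log t⁻¹ + n * t) := by
  have hterm : ∀ j ∈ range (k + 1), (n.choose j : ℝ) ≤ (n.choose j : ℝ) * t ^ j / t ^ k :=
    fun j hj => by
      rw [mul_div_assoc]
      refine le_mul_of_one_le_right (Nat.cast_nonneg _) ((one_le_div (by positivity)).2 ?_)
      exact pow_le_pow_of_le_one ht₀.le ht₁ (Nat.lt_succ_iff.1 (mem_range.1 hj))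
  calc ∑ j ∈ range (k + 1), (n.choose j : ℝ)
      ≤ (∑ j ∈ range (k + 1), (n.choose j : ℝ) * t ^ j) / t ^ k := by
        rw [sum_div]; exact sum_le_sum hterm
    _ ≤ (1 + t) ^ n / t ^ k := by
        gcongr; exact sum_range_choose_mul_pow_le_one_add_pow ht₀.le n k
    _ ≤ exp t ^ n / t ^ k := by
        gcongr; linarith [add_one_le_exp t]
    _ = exp (k * log t⁻¹ + n * t) := by
        rw [exp_add, exp_nat_mul, exp_nat_mul, exp_log (inv_pos.2 ht₀), inv_pow, div_eq_mul_inv,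
          mul_comm]

lemma chernoff_exponent_le {δ α L c x y : ℝ} (hδ : 0 < δ) (hδα : δ ≤ α) (hc : 0 ≤ c)
    (hx : x ≤ δ * L + c) (hy : y ≤ α * L + c) :
    x * log (δ / α)⁻¹ + y * (δ / α) ≤
      c * α / δ + L * (δ * log (1 / δ) + (1 + log α) * δ) := by
  have hα : 0 < α := hδ.trans_le hδα
  rw [inv_div]
  have hlog_nonneg : 0 ≤ log (α / δ) := log_nonneg ((one_le_div hδ).2 hδα)
  have hlog_le : c * log (α / δ) ≤ c * (α / δ - 1) :=
    mul_le_mul_of_nonneg_left (log_le_sub_one_of_pos (by positivity)) hc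
  have hratio : c * (δ / α) ≤ c := mul_le_of_le_one_right hc ((div_le_one hα).2 hδα)
  have hxℓ : x * log (α / δ) ≤ (δ * L + c) * log (α / δ) :=
    mul_le_mul_of_nonneg_right hx hlog_nonneg
  have hyr : y * (δ / α) ≤ δ * L + c * (δ / α) := by
    calc y * (δ / α) ≤ (α * L + c) * (δ / α) := mul_le_mul_of_nonneg_right hy (by positivity)
      _ = δ * L + c * (δ / α) := by field_simp
  have hE : L * (δ * log (1 / δ) + (1 + log α) * δ) = δ * L * log (α / δ) + δ * L := by
    rw [div_eq_mul_one_div α, log_mul hα.ne' (by positivity)]; ring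
  rw [mul_div_assoc, hE]
  linarith

/-- Entropy bound for partial binomial sums: there is an absolute constant `C > 10`
such that whenever `0 < δ < 1`, `α > 10`, `Q ≥ 16`, `|n - α loglog Q| ≤ 100` and
`|k - δ loglog Q| ≤ 100`, one has
`∑_{j ≤ k} C(n,j) ≤ e^{Cα/δ} (log Q)^{δ log(1/δ) + (1 + log α) δ}`. -/
theorem binomial_sum_bound :
    ∃ C : ℝ, 10 < C ∧
      ∀ (δ α Q : ℝ) (n k : ℕ), 0 < δ → δ < 1 → 10 < α → 16 ≤ Q →
        |(n : ℝ) - α * Real.log (Real.log Q)| ≤ 100 →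
        |(k : ℝ) - δ * Real.log (Real.log Q)| ≤ 100 →
        ∑ j ∈ Finset.range (k + 1), (n.choose j : ℝ) ≤
          Real.exp (C * α / δ) *
            Real.log Q ^ (δ * Real.log (1/δ) + (1 + Real.log α) * δ) := by
  refine ⟨100, by norm_num, fun δ α Q n k hδ hδ₁ hα hQ hn hk => ?_⟩
  have hδα : δ ≤ α := by linarith
  have hlogQ : 0 < log Q := log_pos (by linarith)
  calc ∑ j ∈ range (k + 1), (n.choose j : ℝ)
      ≤ exp (k * log (δ / α)⁻¹ + n * (δ / α)) :=
        sum_range_choose_le_exp (by positivity) ((div_le_one (by linarith)).2 hδα) n k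
    _ ≤ exp (100 * α / δ + log (log Q) * (δ * log (1 / δ) + (1 + log α) * δ)) :=
        exp_le_exp.2 <| chernoff_exponent_le hδ hδα (by norm_num)
          (by linarith [(abs_le.1 hk).2]) (by linarith [(abs_le.1 hn).2])
    _ = exp (100 * α / δ) * log Q ^ (δ * log (1 / δ) + (1 + log α) * δ) := by
        rw [exp_add, rpow_def_of_pos hlogQ]
end

section
/- Let $p_1, p_2, d, d_1', d_2', a, \beta_1, \beta_2$ be integers with $d, d_1', d_2'$ pairwise coprime, $p_1, p_2$ coprime to $d d_1' d_2'$, $p_1 \equiv p_2 \equiv a \pmod d$, $d_1' \equiv \beta_1 \pmod d$, $d_2' \equiv \beta_2 \pmod d$, and $p_1$ coprime to $d_1'$, $p_2$ coprime to $d_2'$, and $d \mid p_2 - p_1$. Then, as elements of $\mathbb{Q}/\mathbb{Z}$: $\frac{\overline{p_1 d_2}}{d_1'} + \frac{\overline{p_2 d_1}}{d_2'} + \frac{\overline{a\beta_1\beta_2}}{d} \equiv \frac{((p_2-p_1)/d)\,\overline{p_1 d_2'}}{p_2 d_1'} + \frac{1}{p_2 d d_1' d_2'} \pmod 1$, where $d_1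 = d d_1'$, $d_2 = d d_2'$, and $\overline{x}$ denotes multiplicative inverse modulo the respective denominator. -/
/-- Reciprocity manipulation from the off-diagonal dispersion analysis. With
`d₁ = d d₁'`, `d₂ = d d₂'`, `d, d₁', d₂'` pairwise coprime, `p₁, p₂` coprime to
`d d₁' d₂'`, `p₁ ≡ p₂ ≡ a (mod d)`, `d₁' ≡ β₁`, `d₂' ≡ β₂ (mod d)`, `d ∣ p₂ - p₁`,
and with `x₁, x₂, x₃, y` the inverses of `p₁ d₂` mod `d₁'`, `p₂ d₁` mod `d₂'`,
`a β₁ β₂` mod `d`, and `p₁ d₂'` mod `p₂ d₁'`, one has, modulo 1: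
`x₁/d₁' + x₂/d₂' + x₃/d ≡ ((p₂-p₁)/d) y / (p₂ d₁') + 1/(p₂ d d₁' d₂')`. -/
theorem dispersion_reciprocity (p1 p2 d d1 d2 a b1 b2 x1 x2 x3 y : ℤ)
    (hd : 0 < d) (hd1 : 0 < d1) (hd2 : 0 < d2) (hp1 : 0 < p1) (hp2 : 0 < p2)
    (hdd1 : IsCoprime d d1) (hdd2 : IsCoprime d d2) (hd12 : IsCoprime d1 d2)
    (hp1c : IsCoprime p1 (d * d1 * d2)) (hp2c : IsCoprime p2 (d * d1 * d2))
    (hp1a : p1 ≡ a [ZMOD d]) (hp2a : p2 ≡ a [ZMOD d])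
    (hb1 : d1 ≡ b1 [ZMOD d]) (hb2 : d2 ≡ b2 [ZMOD d])
    (hdvd : d ∣ p2 - p1)
    (hx1 : p1 * (d * d2) * x1 ≡ 1 [ZMOD d1])
    (hx2 : p2 * (d * d1) * x2 ≡ 1 [ZMOD d2])
    (hx3 : a * b1 * b2 * x3 ≡ 1 [ZMOD d])
    (hy : p1 * d2 * y ≡ 1 [ZMOD p2 * d1]) :
    ∃ n : ℤ,
      (x1 : ℚ) / d1 + (x2 : ℚ) / d2 + (x3 : ℚ) / d =
        (((p2 - p1) / d : ℤ) : ℚ) * y / ((p2 : ℚ) * d1) +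
          1 / ((p2 : ℚ) * d * d1 * d2) + n := by
  obtain ⟨q, hq⟩ := hdvd
  set A : ℤ := p2*d*d2*x1 + p2*d*d1*x2 + p2*d1*d2*x3 - d*q*d2*y - 1 with hA
  -- hy restricted to d1 and to p2
  have hyd1 : p1 * d2 * y ≡ 1 [ZMOD d1] := Int.ModEq.of_dvd ⟨p2, mul_comm _ _⟩ hy
  have hyp2 : p1 * d2 * y ≡ 1 [ZMOD p2] := Int.ModEq.of_dvd ⟨d1, rfl⟩ hy
  -- d*x1 ≡ y mod d1
  have hc : d * x1 ≡ y [ZMOD d1] := by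
    calc d * x1 = d*x1*1 := by ring
    _ ≡ d*x1*(p1*d2*y) [ZMOD d1] := (hyd1.mul_left _).symm
    _ = y*(p1*(d*d2)*x1) := by ring
    _ ≡ y*1 [ZMOD d1] := hx1.mul_left _
    _ = y := by ring
  have hAd1 : d1 ∣ A := by
    have h1 : d1 ∣ p1*(d*d2)*x1 - 1 := dvd_sub_comm.mp hx1.dvd
    have h2 : d1 ∣ y - d*x1 := hc.dvd
    have : A = (p1*(d*d2)*x1 - 1) - (d*q*d2)*(y - d*x1) + d1*(p2*d*x2 + p2*d2*x3) := by
      rw [hA, show p2 = p1 + d*q from by linarith [hq]]; ring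
    rw [this]
    exact dvd_add (dvd_sub h1 (Dvd.dvd.mul_left h2 _)) (dvd_mul_right _ _)
  have hAd2 : d2 ∣ A := by
    have h1 : d2 ∣ p2*(d*d1)*x2 - 1 := dvd_sub_comm.mp hx2.dvd
    have : A = d2*(p2*d*x1 + p2*d1*x3 - d*q*y) + (p2*(d*d1)*x2 - 1) := by rw [hA]; ring
    rw [this]; exact dvd_add (dvd_mul_right _ _) h1
  have hAd : d ∣ A := by
    have h3 : p2*d1*d2*x3 ≡ 1 [ZMOD d] := by
      calc p2*d1*d2*x3 = p2*(d1*d2)*x3 := by ring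
      _ ≡ a*(b1*b2)*x3 [ZMOD d] := ((hp2a.mul (hb1.mul hb2)).mul_right _)
      _ = a*b1*b2*x3 := by ring
      _ ≡ 1 [ZMOD d] := hx3
    have h1 : d ∣ p2*d1*d2*x3 - 1 := dvd_sub_comm.mp h3.dvd
    have : A = d*(p2*d2*x1 + p2*d1*x2 - q*d2*y) + (p2*d1*d2*x3 - 1) := by rw [hA]; ring
    rw [this]; exact dvd_add (dvd_mul_right _ _) h1
  have hAp2 : p2 ∣ A := by
    have h1 : p2 ∣ p1*d2*y - 1 := dvd_sub_comm.mp hyp2.dvd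
    have : A = p2*(d*d2*x1 + d*d1*x2 + d1*d2*x3 - d2*y) + (p1*d2*y - 1) := by
      rw [hA, show d*q = p2 - p1 from hq.symm]; ring
    rw [this]; exact dvd_add (dvd_mul_right _ _) h1
  have hN : p2*(d*(d1*d2)) ∣ A := by
    have h12 : d1*d2 ∣ A := hd12.mul_dvd hAd1 hAd2
    have hdd : d*(d1*d2) ∣ A := (hdd1.mul_right hdd2).mul_dvd hAd h12
    have hc2 : IsCoprime p2 (d*(d1*d2)) := by rwa [← mul_assoc]
    exact hc2.mul_dvd hAp2 hdd
  obtain ⟨n, hn⟩ := hN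
  refine ⟨n, ?_⟩
  have hqdiv : (p2 - p1) / d = q := by rw [hq]; exact Int.mul_ediv_cancel_left q hd.ne'
  rw [hqdiv]
  have hnQ : (p2:ℚ)*d*d2*x1 + p2*d*d1*x2 + p2*d1*d2*x3 - d*q*d2*y - 1
      = p2*(d*(d1*d2))*n := by exact_mod_cast hn
  have h0 : (d:ℚ) ≠ 0 := Int.cast_ne_zero.2 hd.ne'
  have h1 : (d1:ℚ) ≠ 0 := Int.cast_ne_zero.2 hd1.ne'
  have h2 : (d2:ℚ) ≠ 0 := Int.cast_ne_zero.2 hd2.ne'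
  have h3 : (p2:ℚ) ≠ 0 := Int.cast_ne_zero.2 hp2.ne'
  have key : (x1 : ℚ) / d1 + (x2 : ℚ) / d2 + (x3 : ℚ) / d -
      ((q : ℚ) * y / ((p2 : ℚ) * d1) + 1 / ((p2 : ℚ) * d * d1 * d2) + n)
      = (((p2:ℚ)*d*d2*x1 + p2*d*d1*x2 + p2*d1*d2*x3 - d*q*d2*y - 1)
          - (p2:ℚ)*(d*(d1*d2))*n) / ((p2 : ℚ) * d * d1 * d2) := by
    field_simp
    ring
  rw [hnQ, sub_self, zero_div] at key
  linarith [key]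
end
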